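/- Fix an integer m ≥ 1, set x(t) = cos(2t) and y(t) = cos((2m+1)t + 1/2), and let k be an integer with 1 ≤ k ≤ 2m. Let t₁ = (2(2m+1) − 2k)π/(2(2m+1)) and t₂ = (2(2m+1) + 2k)π/(2(2m+1)) be the Type II double-point times with j = 2. Then x′(t₁) = −x′(t₂) = 2 sin(2kπ/(2m+1)) and y′(t₁) = y′(t₂) = (−1)^k (2m+1) sin(1/2), where x′ and y′ denote the derivatives of x and y. -/

import Mathlib

/-! With `N = 2m + 1` the two times are `π ∓ kπ/N`. Since `cos 2t` has period `π`,
`x′(π + s) = -2 sin 2s` is odd in `s`; and `N(π ∓ kπ/N) + 1/2 = 1/2 + (N ∓ k)π` with `N` odd,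
so both `y`-derivatives equal `(-1)^k N sin(1/2)`. -/

open Real

theorem deriv_cos_mul_add (a b t : ℝ) :
    deriv (fun t => cos (a * t + b)) t = -sin (a * t + b) * a := by
  simpa using (((hasDerivAt_id t).const_mul a).add_const b).cos.deriv

theorem deriv_cos_two_mul_pi_add (s : ℝ) :
    deriv (fun t => cos (2 * t)) (π + s) = -2 * sin (2 * s) := by
  have h := deriv_cos_mul_add 2 0 (π + s)
  simp only [add_zero] at h
  rw [h, mul_add, add_comm, sin_add_two_pi]
  ring

theorem deriv_cos_odd_mul_add_pi_add (n j : ℤ) (hn : Odd n) (c : ℝ) :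
    deriv (fun t => cos (n * t + c)) (π + j * π / n) = (-1) ^ j * n * sin c := by
  have hn₀ : (n : ℝ) ≠ 0 := Int.cast_ne_zero.mpr (by rintro rfl; exact Int.not_odd_zero hn)
  have hangle : (n : ℝ) * (π + j * π / n) + c = c + ((n + j : ℤ) : ℝ) * π := by
    push_cast; field_simp; ring
  rw [deriv_cos_mul_add, hangle, sin_add_int_mul_pi,
    zpow_add₀ (by norm_num : (-1 : ℝ) ≠ 0), hn.neg_one_zpow]
  ring

theorem typeII_j2_derivative_values
    (m k : ℤ)
    (x y : ℝ → ℝ)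
    (hx : ∀ t, x t = Real.cos (2 * t))
    (hy : ∀ t, y t = Real.cos ((2 * (m : ℝ) + 1) * t + 1 / 2))
    (t₁ t₂ : ℝ)
    (ht₁ : t₁ = (2 * (2 * (m : ℝ) + 1) - 2 * (k : ℝ)) * π / (2 * (2 * (m : ℝ) + 1)))
    (ht₂ : t₂ = (2 * (2 * (m : ℝ) + 1) + 2 * (k : ℝ)) * π / (2 * (2 * (m : ℝ) + 1))) :
    deriv x t₁ = -deriv x t₂ ∧
    deriv x t₁ = 2 * Real.sin (2 * (k : ℝ) * π / (2 * (m : ℝ) + 1)) ∧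
    deriv y t₁ = deriv y t₂ ∧
    deriv y t₁ = (-1 : ℝ) ^ k * (2 * (m : ℝ) + 1) * Real.sin (1 / 2) := by
  have hodd : Odd (2 * m + 1) := odd_two_mul_add_one m
  have hN : ((2 * m + 1 : ℤ) : ℝ) = 2 * (m : ℝ) + 1 := by push_cast; ring
  have hN₀ : 2 * (m : ℝ) + 1 ≠ 0 := by rw [← hN]; exact_mod_cast (by omega : 2 * m + 1 ≠ 0)
  have hx' : x = fun t => cos (2 * t) := funext hx
  have hy' : y = fun t => cos (((2 * m + 1 : ℤ) : ℝ) * t + 1 / 2) := by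
    funext t; rw [hN]; exact hy t
  have ht₁' : t₁ = π + ((-k : ℤ) : ℝ) * π / ((2 * m + 1 : ℤ) : ℝ) := by
    rw [ht₁, hN]; field_simp; push_cast; ring
  have ht₂' : t₂ = π + (k : ℝ) * π / ((2 * m + 1 : ℤ) : ℝ) := by
    rw [ht₂, hN]; field_simp
  have hx₁ : deriv x t₁ = 2 * sin (2 * (k : ℝ) * π / (2 * (m : ℝ) + 1)) := by
    rw [hx', ht₁', deriv_cos_two_mul_pi_add, hN]; push_cast
    simp only [neg_mul, neg_div, mul_neg, sin_neg, neg_neg]; ring_nf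
  have hx₂ : deriv x t₂ = -2 * sin (2 * (k : ℝ) * π / (2 * (m : ℝ) + 1)) := by
    rw [hx', ht₂', deriv_cos_two_mul_pi_add, hN]; ring_nf
  have hy₁ : deriv y t₁ = (-1 : ℝ) ^ k * (2 * (m : ℝ) + 1) * sin (1 / 2) := by
    rw [hy', ht₁', deriv_cos_odd_mul_add_pi_add _ _ hodd, hN, zpow_neg, ← inv_zpow,
      inv_neg, inv_one]
  have hy₂ : deriv y t₂ = (-1 : ℝ) ^ k * (2 * (m : ℝ) + 1) * sin (1 / 2) := by
    rw [hy', ht₂', deriv_cos_odd_mul_add_pi_add _ _ hodd, hN]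
  exact ⟨by rw [hx₁, hx₂]; ring, hx₁, hy₁.trans hy₂.symm, hy₁⟩
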